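/- Let G = Σ_{n≥0} C(2,n) x^n ∈ ℚ[[x]] be the generating function of the generalized Catalan numbers and let H = Σ_{n≥0} 2^n · catalan(n) · x^n ∈ ℚ[[x]] (so that H(x) = C(2x) where C is the Catalan number generating function). Then G · (1 − x·H) = 1, i.e., Σ_{n≥0} C(2,n) x^n = 1/(1 − x·C(2x)). -/

import Mathlib

/-- Catalan's triangle: `C_{n,k} = ((n-k+1)/(n+1)) * binom(n+k, n)` (the division is exact). -/
def catalanTriangle (n k : ℕ) : ℕ := (n - k + 1) * (n + k).choose n / (n + 1)

/-- The generalized Catalan numbers: `C(2,0) = 1` and `C(2,n) = Σ_{k=0}^{n-1} 2^k C_{n-1,k}`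
for `n ≥ 1`. -/
def genCatalan : ℕ → ℕ
  | 0 => 1
  | n + 1 => ∑ k ∈ Finset.range (n + 1), 2 ^ k * catalanTriangle n k

/-- `G = Σ_{n ≥ 0} C(2,n) xⁿ ∈ ℚ[[x]]`, the generating function of the generalized Catalan
numbers. -/
noncomputable def G : PowerSeries ℚ := PowerSeries.mk fun n => (genCatalan n : ℚ)

/-- `H = Σ_{n ≥ 0} 2ⁿ catalan(n) xⁿ ∈ ℚ[[x]]`, i.e. `H(x) = C(2x)` for the Catalan number
generating function `C`. -/
noncomputable def H : PowerSeries ℚ := PowerSeries.mk fun n => ((2 ^ n * catalan n : ℕ) : ℚ)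

lemma ct_zero (n : ℕ) : catalanTriangle n 0 = 1 := by
  simp [catalanTriangle, Nat.choose_self]

/-- Ballot-number form of the Catalan triangle. -/
lemma ct_ballot (n k : ℕ) (h : k + 1 ≤ n) :
    catalanTriangle n (k + 1) = (n + k + 1).choose (k + 1) - (n + k + 1).choose k := by
  set A := (n + k + 1).choose (k + 1) with hA
  set B := (n + k + 1).choose k with hB
  have hrel : A * (k + 1) = B * (n + 1) := by
    have h0 := Nat.choose_succ_right_eq (n + k + 1) k
    rw [← hA, ← hB] at h0
    convert h0 using 2
    omega
  have hBA : B ≤ A := by nlinarith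
  have hsymm : (n + k + 1).choose n = A := by
    rw [hA, ← Nat.choose_symm (by omega : k + 1 ≤ n + k + 1)]
    congr 1
    omega
  have h1 : n - (k + 1) + 1 = n - k := by omega
  have h2 : n + (k + 1) = n + k + 1 := by omega
  rw [catalanTriangle, h2, h1, hsymm]
  have h3 : (n - k) * A = (n + 1) * (A - B) := by
    have hrelz : (A : ℤ) * (k + 1) = (B : ℤ) * (n + 1) := by exact_mod_cast hrel
    zify [hBA, (by omega : k ≤ n)]
    linear_combination -hrelz
  rw [h3, Nat.mul_div_cancel_left _ (by omega : 0 < n + 1)]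

/-- The diagonal of the Catalan triangle is the Catalan numbers. -/
lemma ct_diag (n : ℕ) : catalanTriangle n n = catalan n := by
  rw [catalanTriangle, catalan_eq_centralBinom_div, Nat.centralBinom,
    Nat.sub_self, show n + n = 2 * n by omega]
  norm_num

/-- The subdiagonal of the Catalan triangle also gives Catalan numbers. -/
lemma ct_subdiag (n : ℕ) : catalanTriangle (n + 1) n = catalan (n + 1) := by
  rw [catalanTriangle, catalan_eq_centralBinom_div, Nat.centralBinom,
    show n + 1 - n + 1 = 2 by omega, show n + 1 + n = 2 * n + 1 by omega]
  congr 1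
  have h3 : (2 * (n + 1)).choose (n + 1) = (2 * n + 1).choose n + (2 * n + 1).choose (n + 1) := by
    rw [show 2 * (n + 1) = (2 * n + 1) + 1 by omega]
    exact Nat.choose_succ_succ' (2 * n + 1) n
  have h4 := Nat.choose_symm_half n
  omega

/-- The Pascal-style recurrence for the Catalan triangle. -/
lemma ct_recur (n k : ℕ) (h : k < n) :
    catalanTriangle (n + 1) (k + 1) = catalanTriangle (n + 1) k + catalanTriangle n (k + 1) := by
  cases k with
  | zero =>
      rw [ct_ballot (n + 1) 0 (by omega), ct_ballot n 0 (by omega), ct_zero]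
      simp [Nat.choose_one_right]
      omega
  | succ j =>
      have hm : n + 1 + (j + 1) + 1 = (n + j + 2) + 1 := by omega
      have hb1 : catalanTriangle (n + 1) (j + 1 + 1)
          = ((n + j + 2) + 1).choose (j + 2) - ((n + j + 2) + 1).choose (j + 1) := by
        rw [ct_ballot (n + 1) (j + 1) (by omega)]
        congr 2 <;> omega
      have hb2 : catalanTriangle (n + 1) (j + 1)
          = (n + j + 2).choose (j + 1) - (n + j + 2).choose j := by
        rw [ct_ballot (n + 1) j (by omega)]
        congr 2 <;> omega
      have hb3 : catalanTriangle n (j + 1 + 1)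
          = (n + j + 2).choose (j + 2) - (n + j + 2).choose (j + 1) := by
        rw [ct_ballot n (j + 1) (by omega)]
        congr 2 <;> omega
      have p1 : ((n + j + 2) + 1).choose (j + 2)
          = (n + j + 2).choose (j + 1) + (n + j + 2).choose (j + 2) :=
        Nat.choose_succ_succ' (n + j + 2) (j + 1)
      have p2 : ((n + j + 2) + 1).choose (j + 1)
          = (n + j + 2).choose j + (n + j + 2).choose (j + 1) :=
        Nat.choose_succ_succ' (n + j + 2) j
      have i1 : (n + j + 2).choose j ≤ (n + j + 2).choose (j + 1) :=
        Nat.choose_le_succ_of_lt_half_left (by omega)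
      have i2 : (n + j + 2).choose (j + 1) ≤ (n + j + 2).choose (j + 2) :=
        Nat.choose_le_succ_of_lt_half_left (by omega)
      rw [hb1, hb2, hb3, p1, p2]
      omega

/-- The key recurrence for the generalized Catalan numbers. -/
lemma key (n : ℕ) :
    (genCatalan (n + 2) : ℚ) + genCatalan (n + 1) = 2 ^ (n + 2) * catalan (n + 1) := by
  set T : ℚ := ∑ k ∈ Finset.range (n + 1), (2 : ℚ) ^ k * (catalanTriangle (n + 1) k : ℚ) with hT
  have h1 : (genCatalan (n + 2) : ℚ) = T + 2 ^ (n + 1) * catalan (n + 1) := by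
    show ((∑ k ∈ Finset.range (n + 2), 2 ^ k * catalanTriangle (n + 1) k : ℕ) : ℚ) = _
    rw [Finset.sum_range_succ, ct_diag (n + 1)]
    push_cast
    ring
  have hA : ∑ k ∈ Finset.range n, (2 : ℚ) ^ k * (catalanTriangle (n + 1) k : ℚ)
      = T - 2 ^ n * catalan (n + 1) := by
    rw [hT, Finset.sum_range_succ, ct_subdiag n]
    ring
  have hB : ∑ k ∈ Finset.range n, (2 : ℚ) ^ (k + 1) * (catalanTriangle n (k + 1) : ℚ) + 1
      = (genCatalan (n + 1) : ℚ) := by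
    show _ = ((∑ k ∈ Finset.range (n + 1), 2 ^ k * catalanTriangle n k : ℕ) : ℚ)
    rw [Finset.sum_range_succ']
    push_cast [ct_zero]
    ring
  have hstep : ∀ k ∈ Finset.range n,
      (2 : ℚ) ^ (k + 1) * (catalanTriangle (n + 1) (k + 1) : ℚ)
      = 2 * ((2 : ℚ) ^ k * (catalanTriangle (n + 1) k : ℚ))
        + (2 : ℚ) ^ (k + 1) * (catalanTriangle n (k + 1) : ℚ) := by
    intro k hk
    rw [ct_recur n k (Finset.mem_range.mp hk)]
    push_cast
    ring
  have h2 : T = 2 * (T - 2 ^ n * catalan (n + 1))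
      + (∑ k ∈ Finset.range n, (2 : ℚ) ^ (k + 1) * (catalanTriangle n (k + 1) : ℚ)) + 1 := by
    conv_lhs => rw [hT, Finset.sum_range_succ', ct_zero]
    rw [Finset.sum_congr rfl hstep, Finset.sum_add_distrib, ← Finset.mul_sum, hA]
    push_cast
    ring
  have e1 : (2 : ℚ) ^ (n + 1) = 2 * 2 ^ n := by ring
  have e2 : (2 : ℚ) ^ (n + 2) = 2 * 2 ^ (n + 1) := by ring
  nlinarith [h1, h2, hB, e1, e2]

lemma hfun : PowerSeries.X * (2 * H ^ 2) = H - 1 := by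
  ext m
  cases m with
  | zero => simp [H]
  | succ n =>
      rw [PowerSeries.coeff_succ_X_mul]
      have e : (2 : PowerSeries ℚ) * H ^ 2 = H * H + H * H := by ring
      have hco : ∀ m : ℕ, PowerSeries.coeff m H = ((2 ^ m * catalan m : ℕ) : ℚ) := by
        intro m; simp [H]
      have key2 : PowerSeries.coeff n (H * H)
          = 2 ^ n * ((catalan (n + 1) : ℕ) : ℚ) := by
        rw [PowerSeries.coeff_mul, catalan_succ' n, Nat.cast_sum, Finset.mul_sum]
        apply Finset.sum_congr rfl
        intro p hp
        have hpn : p.1 + p.2 = n := Finset.HasAntidiagonal.mem_antidiagonal.mp hp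
        rw [hco, hco]
        push_cast
        rw [show (2 : ℚ) ^ p.1 * (catalan p.1 : ℚ) * ((2 : ℚ) ^ p.2 * (catalan p.2 : ℚ))
            = (2 : ℚ) ^ (p.1 + p.2) * ((catalan p.1 : ℚ) * (catalan p.2 : ℚ)) by
          rw [pow_add]; ring, hpn]
      rw [e, map_add, key2]
      simp only [hco, PowerSeries.coeff_one, map_sub, Nat.succ_ne_zero, if_false]
      push_cast
      ring

lemma hGH : G + PowerSeries.X * G = 1 + PowerSeries.X * (H + H) := by
  ext m
  cases m with
  | zero => simp [G, H, genCatalan]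
  | succ n =>
      rw [map_add, map_add, PowerSeries.coeff_succ_X_mul, PowerSeries.coeff_succ_X_mul]
      have hg : ∀ m : ℕ, PowerSeries.coeff m G = (genCatalan m : ℚ) := by
        intro m; simp [G]
      have hco : ∀ m : ℕ, PowerSeries.coeff m H = ((2 ^ m * catalan m : ℕ) : ℚ) := by
        intro m; simp [H]
      simp only [hg, map_add, hco, PowerSeries.coeff_one, Nat.succ_ne_zero, if_false]
      cases n with
      | zero =>
          norm_num [genCatalan, catalanTriangle]
      | succ m =>
          have hk := key m
          have e2 : (2 : ℚ) ^ (m + 2) * (catalan (m + 1) : ℚ)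
              = 2 ^ (m + 1) * catalan (m + 1) + 2 ^ (m + 1) * catalan (m + 1) := by ring
          push_cast at hk ⊢
          linarith [hk, e2]

/-- `Σ_{n ≥ 0} C(2,n) xⁿ = 1 / (1 - x C(2x))`, i.e. `G ⬝ (1 - x H) = 1`. -/
theorem genCatalan_gf : G * (1 - PowerSeries.X * H) = 1 := by
  have hne : (1 + PowerSeries.X : PowerSeries ℚ) ≠ 0 := by
    intro h
    have := congrArg (PowerSeries.constantCoeff (R := ℚ)) h
    simp at this
  apply mul_left_cancel₀ hne
  have step : (1 + PowerSeries.X) * (G * (1 - PowerSeries.X * H))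
      = (G + PowerSeries.X * G) * (1 - PowerSeries.X * H) := by ring
  rw [step, hGH]
  linear_combination (-(PowerSeries.X : PowerSeries ℚ)) * hfun
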